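/- The attainable (ξ,ψ)-region over stochastically increasing copulas satisfies {(ξ(C), ψ(C)) : C a stochastically increasing bivariate copula} = {(x,y) ∈ [0,1]² : x ≤ y ≤ √x}. -/

import Mathlib

/-!
For `v ∈ (0,1)` let `I(v) = ∫₀¹ (∂₁C(t,v))² dt` and `w = C(v,v) = ∫₀^v ∂₁C(t,v) dt`.
If `C` is SI, `d = ∂₁C(t,v) ∈ [0,1]` stays above its value `m` at `t = v` for `t ≤ v` and below it
for `t ≥ v`, so integrating `(d - 1)(d - m) ≤ 0` over `[0,v]` and `d (d - m) ≤ 0` over `[v,1]`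
gives `I(v) ≤ w`, hence `ξ ≤ ψ`. For every copula, Cauchy–Schwarz on `[0,v]` and `[v,1]` gives
`I(v) ≥ w²/v + (v-w)²/(1-v)`; this convex function of `w` dominates its tangent line
`2μw - μ²v + (1-μ)²v²`, and integrating with `μ = ψ` gives `ξ ≥ ψ²`. Together,
`0 ≤ ψ² ≤ ξ ≤ ψ ≤ 1`.

Conversely, the SI copulas `a·M + (1-a)·E_b`, where `M = min` and `E_b` is the independence copula
rescaled to `[0,b]²` and equal to `M` elsewhere, have `ξ = 1 - b²(1-a²)` and `ψ = 1 - b²(1-a)`,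
and these sweep out the whole region as `a ∈ [0,1]`, `b ∈ (0,1]`.
-/

open MeasureTheory Set

noncomputable section

def IsCopula (C : ℝ → ℝ → ℝ) : Prop :=
  (∀ u ∈ Icc (0:ℝ) 1, ∀ v ∈ Icc (0:ℝ) 1, C u v ∈ Icc (0:ℝ) 1) ∧
  (∀ u ∈ Icc (0:ℝ) 1, C u 0 = 0 ∧ C u 1 = u) ∧
  (∀ v ∈ Icc (0:ℝ) 1, C 0 v = 0 ∧ C 1 v = v) ∧
  (∀ u₁ ∈ Icc (0:ℝ) 1, ∀ u₂ ∈ Icc (0:ℝ) 1, ∀ v₁ ∈ Icc (0:ℝ) 1, ∀ v₂ ∈ Icc (0:ℝ) 1,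
    u₁ ≤ u₂ → v₁ ≤ v₂ → 0 ≤ C u₂ v₂ - C u₁ v₂ - C u₂ v₁ + C u₁ v₁)

/-- The (a.e. defined) partial derivative of `C` with respect to its first argument. -/
def d1 (C : ℝ → ℝ → ℝ) (t v : ℝ) : ℝ := deriv (fun s => C s v) t

/-- Chatterjee's rank correlation. -/
def xi (C : ℝ → ℝ → ℝ) : ℝ :=
  6 * (∫ v in (0:ℝ)..1, ∫ t in (0:ℝ)..1, (d1 C t v) ^ 2) - 2

/-- Spearman's footrule. -/
def psi (C : ℝ → ℝ → ℝ) : ℝ :=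
  6 * (∫ v in (0:ℝ)..1, C v v) - 2

/-- Stochastically increasing: for each `v`, `t ↦ ∂₁C(t,v)` agrees a.e. on `[0,1]`
with a non-increasing function. -/
def IsSI (C : ℝ → ℝ → ℝ) : Prop :=
  ∀ v ∈ Icc (0:ℝ) 1, ∃ g : ℝ → ℝ, AntitoneOn g (Icc (0:ℝ) 1) ∧
    (∀ᵐ t ∂(volume.restrict (Icc (0:ℝ) 1)), d1 C t v = g t)

open Topology

theorem deriv_nonneg_of_monotoneOn {f : ℝ → ℝ} {s : Set ℝ} {x : ℝ} (hs : s ∈ 𝓝 x)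
    (hf : MonotoneOn f s) : 0 ≤ deriv f x := by
  rw [← derivWithin_of_mem_nhds hs]
  exact hf.derivWithin_nonneg

theorem deriv_mem_Icc_of_monotoneOn_of_lipschitzOnWith {f : ℝ → ℝ} {s : Set ℝ} {x : ℝ}
    (hs : s ∈ 𝓝 x) (hmono : MonotoneOn f s) (hlip : LipschitzOnWith 1 f s) :
    deriv f x ∈ Icc 0 1 := by
  have hle : ‖deriv f x‖ ≤ 1 := by simpa using norm_deriv_le_of_lipschitzOn (f := f) hs hlip
  exact ⟨deriv_nonneg_of_monotoneOn hs hmono, (le_abs_self _).trans hle⟩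

theorem sq_integral_div_le_integral_sq {h : ℝ → ℝ} {a b : ℝ} (hab : a < b)
    (hi : IntervalIntegrable h volume a b)
    (hi2 : IntervalIntegrable (fun t => h t ^ 2) volume a b) :
    (∫ t in a..b, h t) ^ 2 / (b - a) ≤ ∫ t in a..b, h t ^ 2 := by
  set c := (∫ t in a..b, h t) / (b - a)
  have hvar : 0 ≤ ∫ t in a..b, (h t - c) ^ 2 :=
    intervalIntegral.integral_nonneg hab.le fun t _ => sq_nonneg _
  have hexpand : ∫ t in a..b, (h t - c) ^ 2
      = (∫ t in a..b, h t ^ 2) - 2 * c * (∫ t in a..b, h t) + c ^ 2 * (b - a) := by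
    have : (fun t => (h t - c) ^ 2) = fun t => (h t ^ 2 - 2 * c * h t) + c ^ 2 := by
      funext t; ring
    rw [this, intervalIntegral.integral_add (hi2.sub (hi.const_mul _)) intervalIntegrable_const,
      intervalIntegral.integral_sub hi2 (hi.const_mul _), intervalIntegral.integral_const_mul,
      intervalIntegral.integral_const, smul_eq_mul, mul_comm (b - a)]
  have hne : b - a ≠ 0 := (sub_pos.2 hab).ne'
  have hc : 2 * c * (∫ t in a..b, h t) - c ^ 2 * (b - a) = (∫ t in a..b, h t) ^ 2 / (b - a) := by
    simp only [c]; field_simp; ring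
  linarith

theorem ae_restrict_Icc_mem_Ioo (a b : ℝ) : ∀ᵐ t ∂(volume.restrict (Icc a b)), t ∈ Ioo a b := by
  filter_upwards [ae_restrict_mem measurableSet_Icc, Measure.ae_ne _ a, Measure.ae_ne _ b]
    with t ht hta htb
  exact ⟨ht.1.lt_of_ne' hta, ht.2.lt_of_ne htb⟩

theorem linear_minorant_le_sq_div_add_sq_div {v w μ : ℝ} (hv : v ∈ Ioo (0:ℝ) 1) :
    2 * μ * w - μ ^ 2 * v + (1 - μ) ^ 2 * v ^ 2 ≤ w ^ 2 / v + (v - w) ^ 2 / (1 - v) := by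
  have hv₀ : v ≠ 0 := hv.1.ne'
  have hv₁ : 1 - v ≠ 0 := (sub_pos.2 hv.2).ne'
  have key : w ^ 2 / v + (v - w) ^ 2 / (1 - v) - (2 * μ * w - μ ^ 2 * v + (1 - μ) ^ 2 * v ^ 2)
      = (w - v ^ 2 - μ * v * (1 - v)) ^ 2 / (v * (1 - v)) := by
    field_simp
    ring
  have : 0 ≤ (w - v ^ 2 - μ * v * (1 - v)) ^ 2 / (v * (1 - v)) :=
    div_nonneg (sq_nonneg _) (mul_pos hv.1 (sub_pos.2 hv.2)).le
  linarith

theorem hasDerivAt_of_eqOn_affine {f : ℝ → ℝ} {s : Set ℝ} {x k c : ℝ} (hs : IsOpen s)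
    (hx : x ∈ s) (hf : EqOn f (fun y => k * y + c) s) : HasDerivAt f k x := by
  have : HasDerivAt (fun y => k * y + c) k x := by
    simpa using ((hasDerivAt_id x).const_mul k).add_const c
  exact this.congr_of_eventuallyEq (Filter.eventuallyEq_of_mem (hs.mem_nhds hx) hf)

theorem intervalIntegrable_of_eqOn_Ioc_const {f : ℝ → ℝ} {a b c : ℝ} (hab : a ≤ b)
    (hf : EqOn f (fun _ => c) (Ioc a b)) : IntervalIntegrable f volume a b :=
  (intervalIntegrable_congr (by rwa [uIoc_of_le hab])).2 intervalIntegrable_const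

theorem integral_of_eqOn_Ioc_const {f : ℝ → ℝ} {a b c : ℝ} (hab : a ≤ b)
    (hf : EqOn f (fun _ => c) (Ioc a b)) : ∫ t in a..b, f t = (b - a) * c := by
  rw [intervalIntegral.integral_congr_ae (g := fun _ => c)
    (ae_of_all _ fun t ht => hf (by rwa [uIoc_of_le hab] at ht)), intervalIntegral.integral_const,
    smul_eq_mul]

theorem six_mul_integral_sub_two_eq {f : ℝ → ℝ} {b c : ℝ} (hb0 : 0 < b) (hb1 : b ≤ 1)
    (hf₀ : EqOn f (fun v => c * v + (1 - c) / b * v ^ 2) (Icc 0 b))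
    (hf₁ : EqOn f (fun v => v) (Icc b 1)) :
    6 * (∫ v in (0:ℝ)..1, f v) - 2 = 1 - b ^ 2 * (1 - c) := by
  have hf₀' : EqOn f (fun v => c * v + (1 - c) / b * v ^ 2) (uIcc 0 b) := by
    rwa [uIcc_of_le hb0.le]
  have hf₁' : EqOn f (fun v => v) (uIcc b 1) := by rwa [uIcc_of_le hb1]
  have hpoly : Continuous fun v : ℝ => c * v + (1 - c) / b * v ^ 2 := by fun_prop
  rw [← intervalIntegral.integral_add_adjacent_intervals (b := b)
    ((intervalIntegrable_congr (hf₀'.mono uIoc_subset_uIcc)).2 (hpoly.intervalIntegrable _ _))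
    ((intervalIntegrable_congr (hf₁'.mono uIoc_subset_uIcc)).2
      (continuous_id.intervalIntegrable _ _)),
    intervalIntegral.integral_congr hf₀', intervalIntegral.integral_congr hf₁',
    intervalIntegral.integral_add (f := fun v => c * v) (g := fun v => (1 - c) / b * v ^ 2)
      (Continuous.intervalIntegrable (by fun_prop) _ _)
      (Continuous.intervalIntegrable (by fun_prop) _ _),
    intervalIntegral.integral_const_mul, intervalIntegral.integral_const_mul, integral_pow]
  simp only [integral_id]
  field_simp
  ring

namespace IsCopula

variable {C : ℝ → ℝ → ℝ}

theorem sub_left_mem_Icc (hC : IsCopula C) {v u₁ u₂ : ℝ} (hv : v ∈ Icc (0:ℝ) 1)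
    (hu₁ : u₁ ∈ Icc (0:ℝ) 1) (hu₂ : u₂ ∈ Icc (0:ℝ) 1) (hu : u₁ ≤ u₂) :
    C u₂ v - C u₁ v ∈ Icc 0 (u₂ - u₁) := by
  have h₀ := hC.2.2.2 u₁ hu₁ u₂ hu₂ 0 ⟨le_rfl, zero_le_one⟩ v hv hu hv.1
  have h₁ := hC.2.2.2 u₁ hu₁ u₂ hu₂ v hv 1 ⟨zero_le_one, le_rfl⟩ hu hv.2
  rw [(hC.2.1 u₁ hu₁).1, (hC.2.1 u₂ hu₂).1] at h₀
  rw [(hC.2.1 u₁ hu₁).2, (hC.2.1 u₂ hu₂).2] at h₁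
  constructor <;> linarith

theorem monotoneOn_left (hC : IsCopula C) {v : ℝ} (hv : v ∈ Icc (0:ℝ) 1) :
    MonotoneOn (fun u => C u v) (Icc 0 1) := fun _ hu₁ _ hu₂ hu =>
  sub_nonneg.1 (hC.sub_left_mem_Icc hv hu₁ hu₂ hu).1

theorem lipschitzOnWith_left (hC : IsCopula C) {v : ℝ} (hv : v ∈ Icc (0:ℝ) 1) :
    LipschitzOnWith 1 (fun u => C u v) (Icc 0 1) := by
  refine LipschitzOnWith.of_dist_le_mul fun x hx y hy => ?_
  simp only [Real.dist_eq, NNReal.coe_one, one_mul]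
  rcases le_total x y with h | h
  · have := hC.sub_left_mem_Icc hv hx hy h
    rw [abs_sub_comm, abs_sub_comm x, abs_of_nonneg this.1, abs_of_nonneg (sub_nonneg.2 h)]
    exact this.2
  · have := hC.sub_left_mem_Icc hv hy hx h
    rw [abs_of_nonneg this.1, abs_of_nonneg (sub_nonneg.2 h)]
    exact this.2

theorem monotoneOn_right (hC : IsCopula C) {u : ℝ} (hu : u ∈ Icc (0:ℝ) 1) :
    MonotoneOn (C u) (Icc 0 1) := fun v₁ hv₁ v₂ hv₂ hv => by
  have := hC.2.2.2 0 ⟨le_rfl, zero_le_one⟩ u hu v₁ hv₁ v₂ hv₂ hu.1 hv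
  rw [(hC.2.2.1 v₁ hv₁).1, (hC.2.2.1 v₂ hv₂).1] at this
  linarith

theorem monotoneOn_diag (hC : IsCopula C) : MonotoneOn (fun v => C v v) (Icc 0 1) :=
  fun _ hx _ hy hxy => (hC.monotoneOn_left hx hx hy hxy).trans (hC.monotoneOn_right hy hx hy hxy)

theorem monotoneOn_sub_left (hC : IsCopula C) {v₁ v₂ : ℝ} (hv₁ : v₁ ∈ Icc (0:ℝ) 1)
    (hv₂ : v₂ ∈ Icc (0:ℝ) 1) (hv : v₁ ≤ v₂) :
    MonotoneOn (fun u => C u v₂ - C u v₁) (Icc 0 1) := fun u₁ hu₁ u₂ hu₂ hu => by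
  have := hC.2.2.2 u₁ hu₁ u₂ hu₂ v₁ hv₁ v₂ hv₂ hu hv
  dsimp only
  linarith

theorem absolutelyContinuousOnInterval_left (hC : IsCopula C) {v a b : ℝ}
    (hv : v ∈ Icc (0:ℝ) 1) (ha : a ∈ Icc (0:ℝ) 1) (hb : b ∈ Icc (0:ℝ) 1) :
    AbsolutelyContinuousOnInterval (fun u => C u v) a b :=
  ((hC.lipschitzOnWith_left hv).mono (uIcc_subset_Icc ha hb)).absolutelyContinuousOnInterval

theorem integral_d1 (hC : IsCopula C) {v a b : ℝ} (hv : v ∈ Icc (0:ℝ) 1)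
    (ha : a ∈ Icc (0:ℝ) 1) (hb : b ∈ Icc (0:ℝ) 1) :
    ∫ t in a..b, d1 C t v = C b v - C a v :=
  (hC.absolutelyContinuousOnInterval_left hv ha hb).integral_deriv_eq_sub

theorem d1_mem_Icc (hC : IsCopula C) {v t : ℝ} (hv : v ∈ Icc (0:ℝ) 1) (ht : t ∈ Ioo (0:ℝ) 1) :
    d1 C t v ∈ Icc 0 1 :=
  deriv_mem_Icc_of_monotoneOn_of_lipschitzOnWith (Icc_mem_nhds ht.1 ht.2)
    (hC.monotoneOn_left hv) (hC.lipschitzOnWith_left hv)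

theorem ae_d1_mem_Icc (hC : IsCopula C) {v : ℝ} (hv : v ∈ Icc (0:ℝ) 1) :
    ∀ᵐ t ∂(volume.restrict (Icc (0:ℝ) 1)), d1 C t v ∈ Icc 0 1 := by
  filter_upwards [ae_restrict_Icc_mem_Ioo 0 1] with t ht using hC.d1_mem_Icc hv ht

theorem intervalIntegrable_d1 (hC : IsCopula C) {v a b : ℝ} (hv : v ∈ Icc (0:ℝ) 1)
    (ha : a ∈ Icc (0:ℝ) 1) (hb : b ∈ Icc (0:ℝ) 1) :
    IntervalIntegrable (fun t => d1 C t v) volume a b :=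
  (hC.absolutelyContinuousOnInterval_left hv ha hb).intervalIntegrable_deriv

theorem intervalIntegrable_d1_sq (hC : IsCopula C) {v a b : ℝ} (hv : v ∈ Icc (0:ℝ) 1)
    (ha : a ∈ Icc (0:ℝ) 1) (hb : b ∈ Icc (0:ℝ) 1) :
    IntervalIntegrable (fun t => d1 C t v ^ 2) volume a b := by
  refine (hC.intervalIntegrable_d1 hv ha hb).mono_fun
    ((measurable_deriv _).pow_const 2).aestronglyMeasurable ?_
  refine ae_restrict_of_ae_restrict_of_subset (uIoc_subset_uIcc.trans (uIcc_subset_Icc ha hb)) ?_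
  filter_upwards [hC.ae_d1_mem_Icc hv] with t ht
  simp only [norm_pow, Real.norm_eq_abs, abs_of_nonneg ht.1]
  exact pow_le_of_le_one ht.1 ht.2 two_ne_zero

theorem d1_le_d1_of_le (hC : IsCopula C) {v₁ v₂ t : ℝ} (hv₁ : v₁ ∈ Icc (0:ℝ) 1)
    (hv₂ : v₂ ∈ Icc (0:ℝ) 1) (hv : v₁ ≤ v₂) (ht : t ∈ Ioo (0:ℝ) 1)
    (hd₁ : DifferentiableAt ℝ (fun u => C u v₁) t) (hd₂ : DifferentiableAt ℝ (fun u => C u v₂) t) :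
    d1 C t v₁ ≤ d1 C t v₂ := by
  have := deriv_nonneg_of_monotoneOn (Icc_mem_nhds ht.1 ht.2) (hC.monotoneOn_sub_left hv₁ hv₂ hv)
  rw [deriv_fun_sub hd₂ hd₁] at this
  exact sub_nonneg.1 this

theorem diag_bound_le_integral_d1_sq (hC : IsCopula C) {v : ℝ} (hv : v ∈ Ioo (0:ℝ) 1) :
    C v v ^ 2 / v + (v - C v v) ^ 2 / (1 - v) ≤ ∫ t in (0:ℝ)..1, d1 C t v ^ 2 := by
  have hv' := Ioo_subset_Icc_self hv
  have h0 : (0:ℝ) ∈ Icc (0:ℝ) 1 := left_mem_Icc.2 zero_le_one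
  have h1 : (1:ℝ) ∈ Icc (0:ℝ) 1 := right_mem_Icc.2 zero_le_one
  have hL := sq_integral_div_le_integral_sq hv.1 (hC.intervalIntegrable_d1 hv' h0 hv')
    (hC.intervalIntegrable_d1_sq hv' h0 hv')
  have hR := sq_integral_div_le_integral_sq hv.2 (hC.intervalIntegrable_d1 hv' hv' h1)
    (hC.intervalIntegrable_d1_sq hv' hv' h1)
  rw [hC.integral_d1 hv' h0 hv', (hC.2.2.1 v hv').1, sub_zero, sub_zero] at hL
  rw [hC.integral_d1 hv' hv' h1, (hC.2.2.1 v hv').2] at hR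
  rw [← intervalIntegral.integral_add_adjacent_intervals (hC.intervalIntegrable_d1_sq hv' h0 hv')
    (hC.intervalIntegrable_d1_sq hv' hv' h1)]
  exact add_le_add hL hR

theorem integral_d1_sq_le_diag (hC : IsCopula C) (hSI : IsSI C) {v : ℝ} (hv : v ∈ Ioo (0:ℝ) 1) :
    ∫ t in (0:ℝ)..1, d1 C t v ^ 2 ≤ C v v := by
  have hv' := Ioo_subset_Icc_self hv
  have h0 : (0:ℝ) ∈ Icc (0:ℝ) 1 := left_mem_Icc.2 zero_le_one
  have h1 : (1:ℝ) ∈ Icc (0:ℝ) 1 := right_mem_Icc.2 zero_le_one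
  obtain ⟨g, hg, hdg⟩ := hSI v hv'
  have hae := (hC.ae_d1_mem_Icc hv').and hdg
  have hleft : ∀ᵐ t ∂(volume.restrict (Icc 0 v)), d1 C t v ^ 2 ≤ (1 + g v) * d1 C t v - g v := by
    filter_upwards [ae_restrict_of_ae_restrict_of_subset (Icc_subset_Icc_right hv.2.le) hae,
      ae_restrict_mem measurableSet_Icc] with t ⟨hd, hdg⟩ ht
    have := hg ⟨ht.1, ht.2.trans hv.2.le⟩ hv' ht.2
    rw [hdg] at hd ⊢
    nlinarith [hd.2]
  have hright : ∀ᵐ t ∂(volume.restrict (Icc v 1)), d1 C t v ^ 2 ≤ g v * d1 C t v := by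
    filter_upwards [ae_restrict_of_ae_restrict_of_subset (Icc_subset_Icc_left hv.1.le) hae,
      ae_restrict_mem measurableSet_Icc] with t ⟨hd, hdg⟩ ht
    have := hg hv' ⟨hv.1.le.trans ht.1, ht.2⟩ ht.1
    rw [hdg] at hd ⊢
    nlinarith [hd.1]
  have hL := intervalIntegral.integral_mono_ae_restrict hv.1.le
    (hC.intervalIntegrable_d1_sq hv' h0 hv')
    (((hC.intervalIntegrable_d1 hv' h0 hv').const_mul _).sub intervalIntegrable_const) hleft
  have hR := intervalIntegral.integral_mono_ae_restrict hv.2.le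
    (hC.intervalIntegrable_d1_sq hv' hv' h1) ((hC.intervalIntegrable_d1 hv' hv' h1).const_mul _)
    hright
  rw [intervalIntegral.integral_sub ((hC.intervalIntegrable_d1 hv' h0 hv').const_mul _)
    intervalIntegrable_const, intervalIntegral.integral_const_mul, hC.integral_d1 hv' h0 hv',
    intervalIntegral.integral_const, (hC.2.2.1 v hv').1, smul_eq_mul] at hL
  rw [intervalIntegral.integral_const_mul, hC.integral_d1 hv' hv' h1, (hC.2.2.1 v hv').2] at hR
  rw [← intervalIntegral.integral_add_adjacent_intervals (hC.intervalIntegrable_d1_sq hv' h0 hv')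
    (hC.intervalIntegrable_d1_sq hv' hv' h1)]
  linarith

theorem monotoneOn_integral_d1_sq (hC : IsCopula C) :
    MonotoneOn (fun v => ∫ t in (0:ℝ)..1, d1 C t v ^ 2) (Icc 0 1) := by
  intro v₁ hv₁ v₂ hv₂ hv
  have h0 : (0:ℝ) ∈ Icc (0:ℝ) 1 := left_mem_Icc.2 zero_le_one
  have h1 : (1:ℝ) ∈ Icc (0:ℝ) 1 := right_mem_Icc.2 zero_le_one
  refine intervalIntegral.integral_mono_ae_restrict zero_le_one
    (hC.intervalIntegrable_d1_sq hv₁ h0 h1) (hC.intervalIntegrable_d1_sq hv₂ h0 h1) ?_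
  filter_upwards [ae_restrict_Icc_mem_Ioo 0 1,
    ae_restrict_of_ae (hC.absolutelyContinuousOnInterval_left hv₁ h0 h1).ae_differentiableAt,
    ae_restrict_of_ae (hC.absolutelyContinuousOnInterval_left hv₂ h0 h1).ae_differentiableAt]
    with t ht hd₁ hd₂
  have ht' : t ∈ uIcc 0 1 := by simpa [uIcc_of_le zero_le_one] using Ioo_subset_Icc_self ht
  exact pow_le_pow_left₀ (hC.d1_mem_Icc hv₁ ht).1
    (hC.d1_le_d1_of_le hv₁ hv₂ hv ht (hd₁ ht') (hd₂ ht')) 2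

theorem intervalIntegrable_integral_d1_sq (hC : IsCopula C) :
    IntervalIntegrable (fun v => ∫ t in (0:ℝ)..1, d1 C t v ^ 2) volume 0 1 :=
  MonotoneOn.intervalIntegrable
    (by simpa [uIcc_of_le zero_le_one] using hC.monotoneOn_integral_d1_sq)

theorem intervalIntegrable_diag (hC : IsCopula C) :
    IntervalIntegrable (fun v => C v v) volume 0 1 :=
  MonotoneOn.intervalIntegrable (by simpa [uIcc_of_le zero_le_one] using hC.monotoneOn_diag)

theorem xi_le_psi (hC : IsCopula C) (hSI : IsSI C) : xi C ≤ psi C := by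
  have := intervalIntegral.integral_mono_ae_restrict zero_le_one
    hC.intervalIntegrable_integral_d1_sq hC.intervalIntegrable_diag
    (by filter_upwards [ae_restrict_Icc_mem_Ioo 0 1] with v hv
          using hC.integral_d1_sq_le_diag hSI hv)
  rw [xi, psi]
  linarith

theorem sq_psi_le_xi (hC : IsCopula C) : psi C ^ 2 ≤ xi C := by
  set μ := psi C with hμ
  have hpoly : IntervalIntegrable (fun v : ℝ => -μ ^ 2 * v + (1 - μ) ^ 2 * v ^ 2) volume 0 1 :=
    (by fun_prop : Continuous fun v : ℝ => -μ ^ 2 * v + (1 - μ) ^ 2 * v ^ 2).intervalIntegrable _ _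
  have hle := intervalIntegral.integral_mono_ae_restrict zero_le_one
    ((hC.intervalIntegrable_diag.const_mul (2 * μ)).add hpoly)
    hC.intervalIntegrable_integral_d1_sq (by
      filter_upwards [ae_restrict_Icc_mem_Ioo 0 1] with v hv
      have := linear_minorant_le_sq_div_add_sq_div (w := C v v) (μ := μ) hv
      linarith [hC.diag_bound_le_integral_d1_sq hv])
  have hpoly_int :
      ∫ v in (0:ℝ)..1, (-μ ^ 2 * v + (1 - μ) ^ 2 * v ^ 2) = -μ ^ 2 / 2 + (1 - μ) ^ 2 / 3 := by
    rw [intervalIntegral.integral_add (f := fun v => -μ ^ 2 * v) (g := fun v => (1 - μ) ^ 2 * v ^ 2)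
      (Continuous.intervalIntegrable (by fun_prop) _ _)
      (Continuous.intervalIntegrable (by fun_prop) _ _),
      intervalIntegral.integral_const_mul, intervalIntegral.integral_const_mul, integral_id,
      integral_pow]
    ring
  rw [intervalIntegral.integral_add (hC.intervalIntegrable_diag.const_mul _) hpoly,
    intervalIntegral.integral_const_mul, hpoly_int] at hle
  rw [hμ, psi] at hle ⊢
  rw [xi]
  linear_combination 6 * hle

theorem mem_region (hC : IsCopula C) (hSI : IsSI C) :
    xi C ∈ Icc (0:ℝ) 1 ∧ psi C ∈ Icc (0:ℝ) 1 ∧ xi C ≤ psi C ∧ psi C ≤ Real.sqrt (xi C) := by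
  have hle := hC.xi_le_psi hSI
  have hsq := hC.sq_psi_le_xi
  have hψ0 : 0 ≤ psi C := by nlinarith
  have hψ1 : psi C ≤ 1 := by nlinarith
  exact ⟨⟨by nlinarith, by linarith⟩, ⟨hψ0, hψ1⟩, hle, Real.le_sqrt_of_sq_le hsq⟩

end IsCopula

def TwoIncreasing (C : ℝ → ℝ → ℝ) : Prop :=
  ∀ ⦃u₁ u₂ v₁ v₂ : ℝ⦄, u₁ ≤ u₂ → v₁ ≤ v₂ → 0 ≤ C u₂ v₂ - C u₁ v₂ - C u₂ v₁ + C u₁ v₁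

namespace TwoIncreasing

variable {C D : ℝ → ℝ → ℝ}

theorem add (hC : TwoIncreasing C) (hD : TwoIncreasing D) :
    TwoIncreasing fun u v => C u v + D u v := fun _ _ _ _ hu hv => by
  linarith [hC hu hv, hD hu hv]

theorem const_mul (hC : TwoIncreasing C) {c : ℝ} (hc : 0 ≤ c) :
    TwoIncreasing fun u v => c * C u v := fun _ _ _ _ hu hv => by
  nlinarith [hC hu hv]

end TwoIncreasing

theorem twoIncreasing_mul {f g : ℝ → ℝ} (hf : Monotone f) (hg : Monotone g) :
    TwoIncreasing fun u v => f u * g v := fun _ _ _ _ hu hv => by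
  nlinarith [mul_nonneg (sub_nonneg.2 (hf hu)) (sub_nonneg.2 (hg hv))]

theorem twoIncreasing_min {f g : ℝ → ℝ} (hf : Monotone f) (hg : Monotone g) :
    TwoIncreasing fun u v => min (f u) (g v) := fun _ _ _ _ hu hv => by
  have := hf hu
  have := hg hv
  simp only [min_def]
  split_ifs <;> linarith

theorem IsCopula.of_twoIncreasing {C : ℝ → ℝ → ℝ} (hC : TwoIncreasing C)
    (hu : ∀ u ∈ Icc (0:ℝ) 1, C u 0 = 0 ∧ C u 1 = u)
    (hv : ∀ v ∈ Icc (0:ℝ) 1, C 0 v = 0 ∧ C 1 v = v) :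
    IsCopula C := by
  refine ⟨fun u hu' v hv' => ⟨?_, ?_⟩, hu, hv, fun _ _ _ _ _ _ _ _ h₁ h₂ => hC h₁ h₂⟩
  · have := hC hu'.1 hv'.1
    linarith [hu 0 (left_mem_Icc.2 zero_le_one), hu u hu', hv v hv']
  · have := hC hu'.1 hv'.2
    linarith [hu 0 (left_mem_Icc.2 zero_le_one), hu u hu', hv v hv', hu'.2]

def blockCopula (b u v : ℝ) : ℝ := if u ≤ b ∧ v ≤ b then u * v / b else min u v

def mixedCopula (a b u v : ℝ) : ℝ := a * min u v + (1 - a) * blockCopula b u v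

def mixedCopulaDeriv (a b v t : ℝ) : ℝ :=
  if t ≤ v then a + (1 - a) * (min v b / b) else if t ≤ b then (1 - a) * (min v b / b) else 0

section MixedCopula

variable {a b : ℝ}

theorem blockCopula_eq (hb : b ≠ 0) (u v : ℝ) :
    blockCopula b u v = min u b * (min v b / b) + min (max (u - b) 0) (max (v - b) 0) := by
  unfold blockCopula
  split_ifs with h
  · rw [min_eq_left h.1, min_eq_left h.2, max_eq_right (by linarith [h.1]),
      max_eq_right (by linarith [h.2])]
    field_simp
    simp
  · rcases le_or_gt u b with hu | hu <;> rcases le_or_gt v b with hv | hv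
    · exact absurd ⟨hu, hv⟩ h
    all_goals simp only [min_def, max_def]; split_ifs <;> field_simp <;> linarith

theorem twoIncreasing_blockCopula (hb : 0 < b) : TwoIncreasing (blockCopula b) := by
  have hmin : Monotone fun u : ℝ => min u b := monotone_id.min monotone_const
  have hmax : Monotone fun u : ℝ => max (u - b) 0 :=
    fun _ _ h => max_le_max (sub_le_sub_right h b) le_rfl
  rw [show blockCopula b = _ from funext₂ (blockCopula_eq hb.ne')]
  exact (twoIncreasing_mul hmin fun _ _ h => div_le_div_of_nonneg_right (hmin h) hb.le).add
    (twoIncreasing_min hmax hmax)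

theorem isCopula_mixedCopula (ha0 : 0 ≤ a) (ha1 : a ≤ 1) (hb0 : 0 < b) (hb1 : b ≤ 1) :
    IsCopula (mixedCopula a b) := by
  refine IsCopula.of_twoIncreasing (((twoIncreasing_min monotone_id monotone_id).const_mul ha0).add
    ((twoIncreasing_blockCopula hb0).const_mul (sub_nonneg.2 ha1))) ?_ ?_
  · intro u hu
    unfold mixedCopula blockCopula
    constructor
    · split_ifs <;> simp [hu.1]
    · split_ifs with h
      · rw [le_antisymm hb1 h.2, min_eq_left hu.2]; ring
      · rw [min_eq_left hu.2]; ring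
  · intro v hv
    unfold mixedCopula blockCopula
    constructor
    · split_ifs <;> simp [hv.1]
    · split_ifs with h
      · rw [le_antisymm hb1 h.1, min_eq_right hv.2]; ring
      · rw [min_eq_right hv.2]; ring

theorem hasDerivAt_mixedCopula (hb : 0 < b) {v t : ℝ} (htv : t ≠ v) (htb : t ≠ b) :
    HasDerivAt (fun s => mixedCopula a b s v) (mixedCopulaDeriv a b v t) t := by
  unfold mixedCopulaDeriv
  rcases htv.lt_or_gt with hv | hv
  · rw [if_pos hv.le]
    refine hasDerivAt_of_eqOn_affine (c := 0) isOpen_Iio hv fun s (hs : s < v) => ?_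
    by_cases hvb : v ≤ b
    · rw [mixedCopula, blockCopula, if_pos ⟨hs.le.trans hvb, hvb⟩, min_eq_left hs.le,
        min_eq_left hvb]
      ring
    · rw [mixedCopula, blockCopula, if_neg fun h => hvb h.2, min_eq_left hs.le,
        min_eq_right (not_le.1 hvb).le, div_self hb.ne']
      ring
  rcases htb.lt_or_gt with hb' | hb'
  · rw [if_neg hv.not_ge, if_pos hb'.le]
    refine hasDerivAt_of_eqOn_affine (c := a * v) isOpen_Ioo (show t ∈ Ioo v b from ⟨hv, hb'⟩)
      fun s hs => ?_
    rw [mixedCopula, blockCopula, if_pos ⟨hs.2.le, (hs.1.trans hs.2).le⟩, min_eq_right hs.1.le,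
      min_eq_left (hs.1.trans hs.2).le]
    ring
  · rw [if_neg hv.not_ge, if_neg hb'.not_ge]
    refine hasDerivAt_of_eqOn_affine (k := 0) (c := v) isOpen_Ioi
      (show t ∈ Ioi (max v b) from max_lt hv hb') fun s hs => ?_
    have hs : v < s ∧ b < s := max_lt_iff.1 hs
    rw [mixedCopula, blockCopula, if_neg fun h => hs.2.not_ge h.1, min_eq_right hs.1.le]
    ring

theorem antitone_mixedCopulaDeriv (ha0 : 0 ≤ a) (ha1 : a ≤ 1) (hb : 0 < b) {v : ℝ}
    (hv : 0 ≤ v) : Antitone (mixedCopulaDeriv a b v) := by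
  have : 0 ≤ (1 - a) * (min v b / b) :=
    mul_nonneg (sub_nonneg.2 ha1) (div_nonneg (le_min hv hb.le) hb.le)
  intro x y hxy
  unfold mixedCopulaDeriv
  split_ifs <;> linarith

theorem isSI_mixedCopula (ha0 : 0 ≤ a) (ha1 : a ≤ 1) (hb : 0 < b) : IsSI (mixedCopula a b) :=
  fun v hv => ⟨mixedCopulaDeriv a b v, (antitone_mixedCopulaDeriv ha0 ha1 hb hv.1).antitoneOn _,
    by filter_upwards [Measure.ae_ne _ v, Measure.ae_ne _ b] with t htv htb
         using (hasDerivAt_mixedCopula hb htv htb).deriv⟩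

theorem integral_mixedCopulaDeriv_sq (hb1 : b ≤ 1) {v : ℝ} (hv : v ∈ Icc (0:ℝ) 1) :
    ∫ t in (0:ℝ)..1, mixedCopulaDeriv a b v t ^ 2
      = (a + (1 - a) * (min v b / b)) ^ 2 * v + ((1 - a) * (min v b / b)) ^ 2 * (max v b - v) := by
  have hleft : EqOn (fun t => mixedCopulaDeriv a b v t ^ 2)
      (fun _ => (a + (1 - a) * (min v b / b)) ^ 2) (Ioc 0 v) := fun t ht => by
    simp [mixedCopulaDeriv, ht.2]
  have hmid : EqOn (fun t => mixedCopulaDeriv a b v t ^ 2)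
      (fun _ => ((1 - a) * (min v b / b)) ^ 2) (Ioc v (max v b)) := fun t ht => by
    have : t ≤ b := (le_max_iff.1 ht.2).resolve_left ht.1.not_ge
    simp [mixedCopulaDeriv, ht.1.not_ge, this]
  have hright : EqOn (fun t => mixedCopulaDeriv a b v t ^ 2) (fun _ => 0) (Ioc (max v b) 1) :=
    fun t ht => by
      have := max_lt_iff.1 ht.1
      simp [mixedCopulaDeriv, this.1.not_ge, this.2.not_ge]
  have hvM : v ≤ max v b := le_max_left v b
  have hM1 : max v b ≤ 1 := max_le hv.2 hb1
  rw [← intervalIntegral.integral_add_adjacent_intervals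
      (intervalIntegrable_of_eqOn_Ioc_const hv.1 hleft)
      ((intervalIntegrable_of_eqOn_Ioc_const hvM hmid).trans
        (intervalIntegrable_of_eqOn_Ioc_const hM1 hright)),
    ← intervalIntegral.integral_add_adjacent_intervals
      (intervalIntegrable_of_eqOn_Ioc_const hvM hmid)
      (intervalIntegrable_of_eqOn_Ioc_const hM1 hright),
    integral_of_eqOn_Ioc_const hv.1 hleft, integral_of_eqOn_Ioc_const hvM hmid,
    integral_of_eqOn_Ioc_const hM1 hright]
  ring

theorem xi_mixedCopula (hb0 : 0 < b) (hb1 : b ≤ 1) :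
    xi (mixedCopula a b) = 1 - b ^ 2 * (1 - a ^ 2) := by
  have hinner : ∀ v ∈ Icc (0:ℝ) 1, ∫ t in (0:ℝ)..1, d1 (mixedCopula a b) t v ^ 2
      = (a + (1 - a) * (min v b / b)) ^ 2 * v + ((1 - a) * (min v b / b)) ^ 2 * (max v b - v) :=
    fun v hv => by
      rw [← integral_mixedCopulaDeriv_sq hb1 hv]
      refine intervalIntegral.integral_congr_ae ?_
      filter_upwards [Measure.ae_ne volume v, Measure.ae_ne volume b] with t htv htb _
      rw [d1, (hasDerivAt_mixedCopula hb0 htv htb).deriv]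
  refine six_mul_integral_sub_two_eq hb0 hb1 (fun v hv => ?_) (fun v hv => ?_)
  · rw [hinner v ⟨hv.1, hv.2.trans hb1⟩, min_eq_left hv.2, max_eq_right hv.2]
    field_simp
    ring
  · rw [hinner v ⟨hb0.le.trans hv.1, hv.2⟩, min_eq_right hv.1, max_eq_left hv.1,
      div_self hb0.ne']
    simp

theorem psi_mixedCopula (hb0 : 0 < b) (hb1 : b ≤ 1) :
    psi (mixedCopula a b) = 1 - b ^ 2 * (1 - a) := by
  refine six_mul_integral_sub_two_eq hb0 hb1 (fun v hv => ?_) (fun v hv => ?_)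
  · simp only [mixedCopula, blockCopula, hv.2, and_self, if_true, min_self]
    ring
  · rcases hv.1.eq_or_lt with rfl | hbv
    · simp only [mixedCopula, blockCopula, le_rfl, and_self, if_true, min_self]
      field_simp
      ring
    · rw [mixedCopula, blockCopula, if_neg fun h => hbv.not_ge h.1, min_self]
      ring

end MixedCopula

-- Solve `1 - y = b² (1 - a)` and `1 - x = b² (1 - a) (1 + a)` for `a` and `b`.
theorem exists_mixedCopula_params {x y : ℝ} (hx : x ≤ 1) (hxy : x ≤ y) (hyx : y ^ 2 ≤ x) :
    ∃ a b : ℝ, 0 ≤ a ∧ a ≤ 1 ∧ 0 < b ∧ b ≤ 1 ∧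
      1 - b ^ 2 * (1 - a ^ 2) = x ∧ 1 - b ^ 2 * (1 - a) = y := by
  rcases (show y ≤ 1 by nlinarith).eq_or_lt with rfl | hy
  · exact ⟨1, 1, zero_le_one, le_rfl, one_pos, le_rfl, by nlinarith, by norm_num⟩
  have hd : 0 < 1 + x - 2 * y := by nlinarith
  have hs : Real.sqrt (1 + x - 2 * y) ^ 2 = 1 + x - 2 * y := Real.sq_sqrt hd.le
  have hs0 : 0 < Real.sqrt (1 + x - 2 * y) := Real.sqrt_pos.2 hd
  refine ⟨(y - x) / (1 - y), (1 - y) / Real.sqrt (1 + x - 2 * y),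
    div_nonneg (by linarith) (by linarith), (div_le_one (by linarith)).2 (by linarith),
    div_pos (by linarith) hs0, (div_le_one hs0).2 ?_, ?_, ?_⟩
  · rw [← Real.sqrt_sq (sub_pos.2 hy).le]
    exact Real.sqrt_le_sqrt (by nlinarith)
  all_goals
    rw [div_pow, hs, div_mul_eq_mul_div, sub_eq_iff_eq_add, ← sub_eq_iff_eq_add',
      eq_div_iff hd.ne']
    field_simp
    ring

/-- The attainable `(ξ,ψ)`-region over stochastically increasing copulas is
exactly `{(x,y) ∈ [0,1]² : x ≤ y ≤ √x}`. -/
theorem si_region :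
    {p : ℝ × ℝ | ∃ C : ℝ → ℝ → ℝ, IsCopula C ∧ IsSI C ∧ p = (xi C, psi C)} =
      {p : ℝ × ℝ | p.1 ∈ Icc (0:ℝ) 1 ∧ p.2 ∈ Icc (0:ℝ) 1 ∧
        p.1 ≤ p.2 ∧ p.2 ≤ Real.sqrt p.1} := by
  ext ⟨x, y⟩
  simp only [mem_ofPred_eq, Prod.mk.injEq]
  constructor
  · rintro ⟨C, hC, hSI, rfl, rfl⟩
    exact hC.mem_region hSI
  · rintro ⟨hx, hy, hxy, hyx⟩
    obtain ⟨a, b, ha0, ha1, hb0, hb1, hξ, hψ⟩ :=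
      exists_mixedCopula_params hx.2 hxy ((Real.le_sqrt hy.1 hx.1).1 hyx)
    exact ⟨mixedCopula a b, isCopula_mixedCopula ha0 ha1 hb0 hb1, isSI_mixedCopula ha0 ha1 hb0,
      by rw [xi_mixedCopula hb0 hb1, hξ], by rw [psi_mixedCopula hb0 hb1, hψ]⟩
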